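/- arXiv:1910.12486 — 3 statements merged into one kernel-verified Lean document; each statement's English description precedes it below -/
import Mathlib

section
/- (Centered partial-sum bound, display (D.3).) Let ε_1, …, ε_n be real numbers satisfying the uniform interval bound with level ω > 0. Then for all integers 0 ≤ c_- < k < c_+ ≤ n, | ∑_{t=c_-+1}^{k} ε_t − ((k−c_-)/(c_+−c_-)) ∑_{t=c_-+1}^{c_+} ε_t | ≤ 2 ω √( min(k−c_-, c_+−k) ). -/
open Finset

/-- Mean of `x` over the interval `(s, e]`. -/
noncomputable def segMean (x : ℕ → ℝ) (s e : ℕ) : ℝ :=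
  (∑ t ∈ Finset.Ioc s e, x t) / ((e : ℝ) - (s : ℝ))

/-- CUSUM statistic of `x` at split point `b` on the interval `(s, e]`. -/
noncomputable def cusum (x : ℕ → ℝ) (s b e : ℕ) : ℝ :=
  Real.sqrt (((b : ℝ) - s) * ((e : ℝ) - b) / ((e : ℝ) - s)) *
    (segMean x s b - segMean x b e)

/-- Largest element of `A ∪ {0}` that is `< t`. -/
def lbd (A : Finset ℕ) (t : ℕ) : ℕ :=
  ((insert 0 A).filter (fun a => a < t)).max.unbotD 0

/-- Smallest element of `A ∪ {n}` that is `≥ t`. -/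
def ubd (A : Finset ℕ) (n t : ℕ) : ℕ :=
  (((insert n A).filter (fun a => t ≤ a)).min).untopD n

/-- Residual sum of squares of `x_1, …, x_n` with respect to the segmentation
of `{1, …, n}` induced by the set of change point candidates `A`:
each `t` lies in the segment `(lbd A t, ubd A n t]`. -/
noncomputable def RSS (x : ℕ → ℝ) (n : ℕ) (A : Finset ℕ) : ℝ :=
  ∑ t ∈ Finset.Icc 1 n, (x t - segMean x (lbd A t) (ubd A n t)) ^ 2

/-- Schwarz criterion with penalty `ξ`. -/
noncomputable def SC (x : ℕ → ℝ) (n : ℕ) (ξ : ℝ) (A : Finset ℕ) : ℝ :=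
  ((n : ℝ) / 2) * Real.log (RSS x n A / n) + (A.card : ℝ) * ξ

/-- `ε_1, …, ε_n` satisfies the uniform interval bound with level `ω`:
`|∑_{t=s+1}^e ε_t| ≤ ω √(e − s)` for all `0 ≤ s < e ≤ n`. -/
def UIB (ε : ℕ → ℝ) (n : ℕ) (ω : ℝ) : Prop :=
  ∀ s e : ℕ, s < e → e ≤ n →
    |∑ t ∈ Finset.Ioc s e, ε t| ≤ ω * Real.sqrt ((e : ℝ) - s)

/-! With `A = k - c₋`, `B = c₊ - k` and `S₁`, `S₂` the sums over `(c₋, k]` and `(k, c₊]`,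
the centred sum equals `(B S₁ - A S₂) / (A + B)`. The interval bound gives `|S₁| ≤ ω √A` and
`|S₂| ≤ ω √B`, and both `B √A` and `A √B` are at most `(A + B) √(min A B)`. -/

lemma mul_sqrt_le_add_mul_sqrt_min {A B : ℝ} (hA : 0 ≤ A) (hB : 0 ≤ B) :
    B * √A ≤ (A + B) * √(min A B) := by
  rcases le_total A B with hAB | hBA
  · rw [min_eq_left hAB]
    nlinarith [Real.sqrt_nonneg A]
  · rw [min_eq_right hBA]
    calc B * √A = √B * √(B * A) := by
          rw [Real.sqrt_mul hB, ← mul_assoc, Real.mul_self_sqrt hB]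
      _ ≤ √B * A := by
          gcongr
          calc √(B * A) ≤ √(A * A) := by gcongr
            _ = A := Real.sqrt_mul_self hA
      _ ≤ (A + B) * √B := by
          rw [mul_comm]
          gcongr
          linarith

lemma abs_sub_div_add_mul_add_le {S₁ S₂ A B ω : ℝ} (hA : 0 < A) (hB : 0 < B)
    (h₁ : |S₁| ≤ ω * √A) (h₂ : |S₂| ≤ ω * √B) :
    |S₁ - A / (A + B) * (S₁ + S₂)| ≤ 2 * ω * √(min A B) := by
  have hAB : 0 < A + B := by linarith
  have hω : 0 ≤ ω :=
    nonneg_of_mul_nonneg_left ((abs_nonneg S₁).trans h₁) (Real.sqrt_pos.mpr hA)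
  have hB_sqrtA := mul_sqrt_le_add_mul_sqrt_min hA.le hB.le
  have hA_sqrtB := mul_sqrt_le_add_mul_sqrt_min hB.le hA.le
  rw [add_comm B A, min_comm] at hA_sqrtB
  have hrepr : S₁ - A / (A + B) * (S₁ + S₂) = (B * S₁ - A * S₂) / (A + B) := by
    field_simp
    ring
  rw [hrepr, abs_div, abs_of_pos hAB, div_le_iff₀ hAB]
  calc |B * S₁ - A * S₂| ≤ B * |S₁| + A * |S₂| := by
        simpa only [abs_mul, abs_of_pos hA, abs_of_pos hB] using abs_sub (B * S₁) (A * S₂)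
    _ ≤ B * (ω * √A) + A * (ω * √B) := by gcongr
    _ = ω * (B * √A) + ω * (A * √B) := by ring
    _ ≤ ω * ((A + B) * √(min A B)) + ω * ((A + B) * √(min A B)) := by gcongr
    _ = 2 * ω * √(min A B) * (A + B) := by ring

theorem centered_partial_sum_bound_general
    (n : ℕ) (ε : ℕ → ℝ) (ω : ℝ) (hε : UIB ε n ω)
    (cm k cp : ℕ) (h1 : cm < k) (h2 : k < cp) (h3 : cp ≤ n) :
    |(∑ t ∈ Finset.Ioc cm k, ε t)
        - (((k : ℝ) - cm) / ((cp : ℝ) - cm)) * (∑ t ∈ Finset.Ioc cm cp, ε t)|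
      ≤ 2 * ω * Real.sqrt (min ((k : ℝ) - cm) ((cp : ℝ) - k)) := by
  have hsplit : ∑ t ∈ Ioc cm cp, ε t = ∑ t ∈ Ioc cm k, ε t + ∑ t ∈ Ioc k cp, ε t :=
    (sum_Ioc_consecutive ε h1.le h2.le).symm
  have hlen : (cp : ℝ) - cm = ((k : ℝ) - cm) + ((cp : ℝ) - k) := by ring
  rw [hsplit, hlen]
  exact abs_sub_div_add_mul_add_le (by simpa using h1) (by simpa using h2)
    (hε cm k h1 (h2.le.trans h3)) (hε k cp h2 h3)

/-- Centered partial-sum bound, display (D.3): if `ε` satisfies the uniform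
interval bound with level `ω`, then for all `0 ≤ c_- < k < c_+ ≤ n`,
`|∑_{t=c_-+1}^k ε_t − ((k−c_-)/(c_+−c_-)) ∑_{t=c_-+1}^{c_+} ε_t|
  ≤ 2ω √(min(k−c_-, c_+−k))`. -/
theorem centered_partial_sum_bound
    (n : ℕ) (ε : ℕ → ℝ) (ω : ℝ) (hω : 0 < ω) (hε : UIB ε n ω)
    (cm k cp : ℕ) (h1 : cm < k) (h2 : k < cp) (h3 : cp ≤ n) :
    |(∑ t ∈ Finset.Ioc cm k, ε t)
        - (((k : ℝ) - cm) / ((cp : ℝ) - cm)) * (∑ t ∈ Finset.Ioc cm cp, ε t)|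
      ≤ 2 * ω * Real.sqrt (min ((k : ℝ) - cm) ((cp : ℝ) - k)) :=
  centered_partial_sum_bound_general n ε ω hε cm k cp h1 h2 h3
end

section
/- (CUSUM of a single-change signal.) Let s < θ < e be integers with 0 ≤ s and e ≤ n, let μ, d be reals, and let f_t = μ + d · 𝟙{t > θ} for t ∈ {s+1, …, e}. Then: (i) 𝒳_{s,θ,e}(f) = −d √((θ−s)(e−θ)/(e−s)); (ii) |𝒳_{s,c,e}(f)| ≤ |𝒳_{s,θ,e}(f)| for every integer s < c < e; (iii) |d| √( min(θ−s, e−θ)/2 ) ≤ |𝒳_{s,θ,e}(f)| ≤ |d| √( min(θ−s, e−θ) ); (iv) for every integer c with s < c ≤ θ, 𝒳_{s,θ,e}(f)² − 𝒳_{s,c,e}(f)² = d² (θ−c)(e−θ)/(e−c), and for every integer c with θ ≤ c < e, 𝒳_{s,θ,e}(f)² − 𝒳_{s,c,e}(f)² = d² (c−θ)(θ−s)/(c−s). -/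
open Finset

/-! The CUSUM statistic only sees the signal on the window `(s, e]`, so it suffices to treat the
step signal `μ + d·𝟙{t > θ}` itself. Its segment means are explicit, which gives `𝒳_{s,c,e}²` in
closed form on either side of `θ`: both differences in (iv) are visibly nonnegative, so `θ`
maximises `|𝒳_{s,c,e}|`, and (iii) compares `ab/(a+b)`, half the harmonic mean of
`a = θ - s` and `b = e - θ`, with `min a b`. -/

lemma min_div_two_le_mul_div_add {a b : ℝ} (ha : 0 ≤ a) (hb : 0 ≤ b) :
    min a b / 2 ≤ a * b / (a + b) := by
  rcases (add_nonneg ha hb).eq_or_lt with hab | hab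
  · obtain rfl : a = 0 := by linarith
    obtain rfl : b = 0 := by linarith
    simp
  rw [div_le_div_iff₀ two_pos hab]
  rcases le_total a b with h | h
  · rw [min_eq_left h]; nlinarith
  · rw [min_eq_right h]; nlinarith

lemma mul_div_add_le_min {a b : ℝ} (ha : 0 ≤ a) (hb : 0 ≤ b) :
    a * b / (a + b) ≤ min a b := by
  rcases (add_nonneg ha hb).eq_or_lt with hab | hab
  · obtain rfl : a = 0 := by linarith
    obtain rfl : b = 0 := by linarith
    simp
  rw [div_le_iff₀ hab]
  rcases le_total a b with h | h
  · rw [min_eq_left h]; nlinarith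
  · rw [min_eq_right h]; nlinarith

lemma segMean_congr {x y : ℕ → ℝ} {a b : ℕ} (h : ∀ t ∈ Ioc a b, x t = y t) :
    segMean x a b = segMean y a b := by
  rw [segMean, segMean, sum_congr rfl h]

lemma cusum_congr {x y : ℕ → ℝ} {s b e : ℕ} (hsb : s ≤ b) (hbe : b ≤ e)
    (h : ∀ t ∈ Ioc s e, x t = y t) : cusum x s b e = cusum y s b e := by
  have hsub : ∀ {a a'}, s ≤ a → a' ≤ e → ∀ t ∈ Ioc a a', x t = y t := fun ha ha' t ht =>
    h t (Ioc_subset_Ioc ha ha' ht)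
  rw [cusum, cusum, segMean_congr (hsub le_rfl hbe), segMean_congr (hsub hsb le_rfl)]

lemma sq_cusum (x : ℕ → ℝ) {s b e : ℕ} (hsb : s ≤ b) (hbe : b ≤ e) :
    cusum x s b e ^ 2 =
      ((b : ℝ) - s) * ((e : ℝ) - b) / ((e : ℝ) - s) * (segMean x s b - segMean x b e) ^ 2 := by
  have hsb' : (s : ℝ) ≤ b := by exact_mod_cast hsb
  have hbe' : (b : ℝ) ≤ e := by exact_mod_cast hbe
  rw [cusum, mul_pow, Real.sq_sqrt (div_nonneg (mul_nonneg (by linarith) (by linarith))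
    (by linarith))]

def stepSignal (μ d : ℝ) (θ t : ℕ) : ℝ :=
  μ + if θ < t then d else 0

section stepSignal

variable {μ d : ℝ} {θ : ℕ}

lemma sum_Ioc_stepSignal (a b : ℕ) :
    ∑ t ∈ Ioc a b, stepSignal μ d θ t
      = ((b - a : ℕ) : ℝ) * μ + ((b - max a θ : ℕ) : ℝ) * d := by
  have hfilter : (Ioc a b).filter (θ < ·) = Ioc (max a θ) b := by
    ext t; simp only [mem_filter, mem_Ioc, max_lt_iff]; omega
  simp only [stepSignal, sum_add_distrib, sum_const, ← sum_filter, hfilter, Nat.card_Ioc,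
    nsmul_eq_mul]

lemma segMean_stepSignal_of_le {a b : ℕ} (hab : a < b) (hbθ : b ≤ θ) :
    segMean (stepSignal μ d θ) a b = μ := by
  have hab' : (b : ℝ) - a ≠ 0 := sub_ne_zero.mpr (by exact_mod_cast hab.ne')
  rw [segMean, sum_Ioc_stepSignal, Nat.sub_eq_zero_of_le (by omega : b ≤ max a θ),
    Nat.cast_sub hab.le]
  field_simp
  ring

lemma segMean_stepSignal_of_ge {a b : ℕ} (hab : a < b) (hθa : θ ≤ a) :
    segMean (stepSignal μ d θ) a b = μ + d := by
  have hab' : (b : ℝ) - a ≠ 0 := sub_ne_zero.mpr (by exact_mod_cast hab.ne')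
  rw [segMean, sum_Ioc_stepSignal, max_eq_left hθa, Nat.cast_sub hab.le]
  field_simp

lemma segMean_stepSignal_of_le_of_le {a b : ℕ} (hab : a < b) (haθ : a ≤ θ) (hθb : θ ≤ b) :
    segMean (stepSignal μ d θ) a b = μ + d * ((b : ℝ) - θ) / ((b : ℝ) - a) := by
  have hab' : (b : ℝ) - a ≠ 0 := sub_ne_zero.mpr (by exact_mod_cast hab.ne')
  rw [segMean, sum_Ioc_stepSignal, max_eq_right haθ, Nat.cast_sub hab.le, Nat.cast_sub hθb]
  field_simp

variable {s c e : ℕ}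

lemma cusum_stepSignal_self (hsθ : s < θ) (hθe : θ < e) :
    cusum (stepSignal μ d θ) s θ e
      = -d * Real.sqrt ((((θ : ℝ) - s) * ((e : ℝ) - θ)) / ((e : ℝ) - s)) := by
  rw [cusum, segMean_stepSignal_of_le hsθ le_rfl, segMean_stepSignal_of_ge hθe le_rfl]
  ring

lemma sq_cusum_stepSignal_of_le (hsc : s < c) (hcθ : c ≤ θ) (hθe : θ < e) :
    cusum (stepSignal μ d θ) s c e ^ 2
      = d ^ 2 * (((c : ℝ) - s) * ((e : ℝ) - θ) ^ 2 / (((e : ℝ) - s) * ((e : ℝ) - c))) := by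
  have hcs : (c : ℝ) - s ≠ 0 := by rw [sub_ne_zero, Ne, Nat.cast_inj]; omega
  have hec : (e : ℝ) - c ≠ 0 := by rw [sub_ne_zero, Ne, Nat.cast_inj]; omega
  have hes : (e : ℝ) - s ≠ 0 := by rw [sub_ne_zero, Ne, Nat.cast_inj]; omega
  rw [sq_cusum _ hsc.le (by omega), segMean_stepSignal_of_le hsc hcθ,
    segMean_stepSignal_of_le_of_le (by omega) hcθ hθe.le]
  field_simp
  ring

lemma sq_cusum_stepSignal_of_ge (hsθ : s < θ) (hθc : θ ≤ c) (hce : c < e) :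
    cusum (stepSignal μ d θ) s c e ^ 2
      = d ^ 2 * (((θ : ℝ) - s) ^ 2 * ((e : ℝ) - c) / (((e : ℝ) - s) * ((c : ℝ) - s))) := by
  have hcs : (c : ℝ) - s ≠ 0 := by rw [sub_ne_zero, Ne, Nat.cast_inj]; omega
  have hec : (e : ℝ) - c ≠ 0 := by rw [sub_ne_zero, Ne, Nat.cast_inj]; omega
  have hes : (e : ℝ) - s ≠ 0 := by rw [sub_ne_zero, Ne, Nat.cast_inj]; omega
  rw [sq_cusum _ (by omega) hce.le, segMean_stepSignal_of_le_of_le (by omega) hsθ.le hθc,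
    segMean_stepSignal_of_ge hce hθc]
  field_simp
  ring

lemma sq_cusum_stepSignal_self_sub_of_le (hsc : s < c) (hcθ : c ≤ θ) (hθe : θ < e) :
    cusum (stepSignal μ d θ) s θ e ^ 2 - cusum (stepSignal μ d θ) s c e ^ 2
      = d ^ 2 * (((θ : ℝ) - c) * ((e : ℝ) - θ)) / ((e : ℝ) - c) := by
  have heθ : (e : ℝ) - θ ≠ 0 := by rw [sub_ne_zero, Ne, Nat.cast_inj]; omega
  have hec : (e : ℝ) - c ≠ 0 := by rw [sub_ne_zero, Ne, Nat.cast_inj]; omega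
  have hes : (e : ℝ) - s ≠ 0 := by rw [sub_ne_zero, Ne, Nat.cast_inj]; omega
  rw [sq_cusum_stepSignal_of_le hsc hcθ hθe,
    sq_cusum_stepSignal_of_le (hsc.trans_le hcθ) le_rfl hθe]
  field_simp
  ring

lemma sq_cusum_stepSignal_self_sub_of_ge (hsθ : s < θ) (hθc : θ ≤ c) (hce : c < e) :
    cusum (stepSignal μ d θ) s θ e ^ 2 - cusum (stepSignal μ d θ) s c e ^ 2
      = d ^ 2 * (((c : ℝ) - θ) * ((θ : ℝ) - s)) / ((c : ℝ) - s) := by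
  have hθs : (θ : ℝ) - s ≠ 0 := by rw [sub_ne_zero, Ne, Nat.cast_inj]; omega
  have hcs : (c : ℝ) - s ≠ 0 := by rw [sub_ne_zero, Ne, Nat.cast_inj]; omega
  have hes : (e : ℝ) - s ≠ 0 := by rw [sub_ne_zero, Ne, Nat.cast_inj]; omega
  rw [sq_cusum_stepSignal_of_ge hsθ hθc hce,
    sq_cusum_stepSignal_of_ge hsθ le_rfl (hθc.trans_lt hce)]
  field_simp
  ring

lemma abs_cusum_stepSignal_le_abs_self (hsθ : s < θ) (hθe : θ < e) (hsc : s < c)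
    (hce : c < e) :
    |cusum (stepSignal μ d θ) s c e| ≤ |cusum (stepSignal μ d θ) s θ e| := by
  rw [← sq_le_sq, ← sub_nonneg]
  rcases le_total c θ with hcθ | hθc
  · have hcθ' : (c : ℝ) ≤ θ := by exact_mod_cast hcθ
    have hθe' : (θ : ℝ) < e := by exact_mod_cast hθe
    rw [sq_cusum_stepSignal_self_sub_of_le hsc hcθ hθe]
    exact div_nonneg (mul_nonneg (sq_nonneg d) (mul_nonneg (by linarith) (by linarith)))
      (by linarith)
  · have hθc' : (θ : ℝ) ≤ c := by exact_mod_cast hθc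
    have hsθ' : (s : ℝ) < θ := by exact_mod_cast hsθ
    rw [sq_cusum_stepSignal_self_sub_of_ge hsθ hθc hce]
    exact div_nonneg (mul_nonneg (sq_nonneg d) (mul_nonneg (by linarith) (by linarith)))
      (by linarith)

end stepSignal

theorem cusum_single_change_general
    (s θ e : ℕ) (h1 : s < θ) (h2 : θ < e)
    (μ d : ℝ) (f : ℕ → ℝ)
    (hf : ∀ t ∈ Finset.Ioc s e, f t = μ + (if θ < t then d else 0)) :
    (cusum f s θ e
        = -d * Real.sqrt ((((θ : ℝ) - s) * ((e : ℝ) - θ)) / ((e : ℝ) - s)))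
    ∧ (∀ c : ℕ, s < c → c < e → |cusum f s c e| ≤ |cusum f s θ e|)
    ∧ (|d| * Real.sqrt (min ((θ : ℝ) - s) ((e : ℝ) - θ) / 2) ≤ |cusum f s θ e|
        ∧ |cusum f s θ e| ≤ |d| * Real.sqrt (min ((θ : ℝ) - s) ((e : ℝ) - θ)))
    ∧ ((∀ c : ℕ, s < c → c ≤ θ →
          (cusum f s θ e) ^ 2 - (cusum f s c e) ^ 2
            = d ^ 2 * (((θ : ℝ) - c) * ((e : ℝ) - θ)) / ((e : ℝ) - c))
        ∧ (∀ c : ℕ, θ ≤ c → c < e →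
          (cusum f s θ e) ^ 2 - (cusum f s c e) ^ 2
            = d ^ 2 * (((c : ℝ) - θ) * ((θ : ℝ) - s)) / ((c : ℝ) - s))) := by
  have hstep {c : ℕ} (hsc : s ≤ c) (hce : c ≤ e) :
      cusum f s c e = cusum (stepSignal μ d θ) s c e := cusum_congr hsc hce hf
  have hself := cusum_stepSignal_self (μ := μ) (d := d) h1 h2
  rw [hstep h1.le h2.le]
  refine ⟨hself, fun c hsc hce => ?_, ?_, fun c hsc hcθ => ?_, fun c hθc hce => ?_⟩
  · rw [hstep hsc.le hce.le]
    exact abs_cusum_stepSignal_le_abs_self h1 h2 hsc hce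
  · have hθs : (0 : ℝ) ≤ θ - s := sub_nonneg.mpr (by exact_mod_cast h1.le)
    have heθ : (0 : ℝ) ≤ e - θ := sub_nonneg.mpr (by exact_mod_cast h2.le)
    rw [hself, abs_mul, abs_neg, abs_of_nonneg (Real.sqrt_nonneg _),
      show (e : ℝ) - s = (θ - s) + (e - θ) by ring]
    exact ⟨by gcongr ?_ * Real.sqrt ?_; exact min_div_two_le_mul_div_add hθs heθ,
      by gcongr ?_ * Real.sqrt ?_; exact mul_div_add_le_min hθs heθ⟩
  · rw [hstep hsc.le (by omega)]
    exact sq_cusum_stepSignal_self_sub_of_le hsc hcθ h2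
  · rw [hstep (by omega) hce.le]
    exact sq_cusum_stepSignal_self_sub_of_ge h1 hθc hce

/-- CUSUM of a single-change signal: for `f_t = μ + d·𝟙{t > θ}` on `(s, e]`,
(i) the CUSUM at `θ` equals `−d √((θ−s)(e−θ)/(e−s))`;
(ii) `θ` maximises the absolute CUSUM;
(iii) `|d| √(min(θ−s, e−θ)/2) ≤ |𝒳_{s,θ,e}(f)| ≤ |d| √(min(θ−s, e−θ))`;
(iv) explicit formulas for the drop of the squared CUSUM away from `θ`. -/
theorem cusum_single_change
    (n : ℕ) (s θ e : ℕ) (h1 : s < θ) (h2 : θ < e) (h3 : e ≤ n)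
    (μ d : ℝ) (f : ℕ → ℝ)
    (hf : ∀ t ∈ Finset.Ioc s e, f t = μ + (if θ < t then d else 0)) :
    (cusum f s θ e
        = -d * Real.sqrt ((((θ : ℝ) - s) * ((e : ℝ) - θ)) / ((e : ℝ) - s)))
    ∧ (∀ c : ℕ, s < c → c < e → |cusum f s c e| ≤ |cusum f s θ e|)
    ∧ (|d| * Real.sqrt (min ((θ : ℝ) - s) ((e : ℝ) - θ) / 2) ≤ |cusum f s θ e|
        ∧ |cusum f s θ e| ≤ |d| * Real.sqrt (min ((θ : ℝ) - s) ((e : ℝ) - θ)))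
    ∧ ((∀ c : ℕ, s < c → c ≤ θ →
          (cusum f s θ e) ^ 2 - (cusum f s c e) ^ 2
            = d ^ 2 * (((θ : ℝ) - c) * ((e : ℝ) - θ)) / ((e : ℝ) - c))
        ∧ (∀ c : ℕ, θ ≤ c → c < e →
          (cusum f s θ e) ^ 2 - (cusum f s c e) ^ 2
            = d ^ 2 * (((c : ℝ) - θ) * ((θ : ℝ) - s)) / ((c : ℝ) - s))) :=
  cusum_single_change_general s θ e h1 h2 μ d f hf
end

section
/- (Explicit form of the detection part of Proposition 6.1(a): adding a detectable change point decreases the Schwarz criterion.) Let n ≥ 1, ξ > 0, C'' > 0, ω > 0, and let x_t = f_t + ε_t for t = 1, …, n, where ε satisfies the uniform interval bound with level ω. Let A ⊆ {1, …, n−1}, let θ ∈ {1, …, n−1} \ A, and let c_- be the largest element of A ∪ {0} smaller than θ and c_+ the smallest element of A ∪ {n} larger than θ. Assume that for some reals μ, d one has f_t = μ + d · 𝟙{t > θ} for all t ∈ {c_-+1, …, c_+}, that 0 < RSS(A ∪ {θ}; x), that RSS(A; x) ≤ C'' n, and that |d| √( min(θ − c_-, c_+ − θ)/2 ) > 2ω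 + √(2 C'' ξ). Then SC(A ∪ {θ}; x) < SC(A; x). -/
open Finset

open Finset

lemma lbd_eq_of (A : Finset ℕ) (t c : ℕ) (hc : c ∈ insert 0 A) (hct : c < t)
    (hmax : ∀ a ∈ insert 0 A, a < t → a ≤ c) : lbd A t = c := by
  unfold lbd
  have hmem : c ∈ (insert 0 A).filter (fun a => a < t) := Finset.mem_filter.2 ⟨hc, hct⟩
  have h1 : ((insert 0 A).filter (fun a => a < t)).max = (c : WithBot ℕ) := by
    apply le_antisymm
    · exact Finset.max_le (fun a ha => by
        simp only [Finset.mem_filter] at ha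
        exact WithBot.coe_le_coe.2 (hmax a ha.1 ha.2))
    · exact Finset.le_max hmem
  rw [h1]; rfl

lemma ubd_eq_of (A : Finset ℕ) (n t c : ℕ) (hc : c ∈ insert n A) (hct : t ≤ c)
    (hmin : ∀ a ∈ insert n A, t ≤ a → c ≤ a) : ubd A n t = c := by
  unfold ubd
  have hmem : c ∈ (insert n A).filter (fun a => t ≤ a) := Finset.mem_filter.2 ⟨hc, hct⟩
  have h1 : ((insert n A).filter (fun a => t ≤ a)).min = (c : WithTop ℕ) := by
    apply le_antisymm
    · exact Finset.min_le hmem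
    · exact Finset.le_min (fun a ha => by
        simp only [Finset.mem_filter] at ha
        exact WithTop.coe_le_coe.2 (hmin a ha.1 ha.2))
  rw [h1]; rfl

lemma sum_sq_sub_mean (x : ℕ → ℝ) (s e : ℕ) (h : s < e) :
    ∑ t ∈ Finset.Ioc s e, (x t - segMean x s e) ^ 2
      = ∑ t ∈ Finset.Ioc s e, (x t) ^ 2 - ((e : ℝ) - s) * (segMean x s e) ^ 2 := by
  have hN : (0:ℝ) < (e : ℝ) - s := by
    have : (s:ℝ) < e := by exact_mod_cast h
    linarith
  have hcard : ((Finset.Ioc s e).card : ℝ) = (e : ℝ) - s := by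
    rw [Nat.card_Ioc]
    have : s ≤ e := h.le
    push_cast [this]; ring
  have hsum : ∑ t ∈ Finset.Ioc s e, x t = ((e : ℝ) - s) * segMean x s e := by
    rw [segMean]; field_simp
  have hexp : ∀ t, (x t - segMean x s e) ^ 2
      = x t ^ 2 - 2 * segMean x s e * x t + segMean x s e ^ 2 := fun t => by ring
  simp_rw [hexp]
  rw [Finset.sum_add_distrib, Finset.sum_sub_distrib, ← Finset.mul_sum, Finset.sum_const,
    nsmul_eq_mul, hcard, hsum]
  ring

lemma anova (x : ℕ → ℝ) (s b e : ℕ) (hsb : s < b) (hbe : b < e) :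
    ∑ t ∈ Finset.Ioc s e, (x t - segMean x s e) ^ 2
      = ∑ t ∈ Finset.Ioc s b, (x t - segMean x s b) ^ 2
        + ∑ t ∈ Finset.Ioc b e, (x t - segMean x b e) ^ 2
        + (cusum x s b e) ^ 2 := by
  have hse : s < e := hsb.trans hbe
  have hN1 : (0:ℝ) < (b : ℝ) - s := by
    have : (s:ℝ) < b := by exact_mod_cast hsb
    linarith
  have hN2 : (0:ℝ) < (e : ℝ) - b := by
    have : (b:ℝ) < e := by exact_mod_cast hbe
    linarith
  have hN : (0:ℝ) < (e : ℝ) - s := by linarith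
  have hsq : ∑ t ∈ Finset.Ioc s b, (x t) ^ 2 + ∑ t ∈ Finset.Ioc b e, (x t) ^ 2
      = ∑ t ∈ Finset.Ioc s e, (x t) ^ 2 :=
    Finset.sum_Ioc_consecutive _ hsb.le hbe.le
  have hm : segMean x s e = (((b:ℝ) - s) * segMean x s b + ((e:ℝ) - b) * segMean x b e)
      / ((e:ℝ) - s) := by
    rw [segMean, segMean, segMean, ← Finset.sum_Ioc_consecutive x hsb.le hbe.le]
    field_simp
  have hc2 : (cusum x s b e) ^ 2
      = (((b:ℝ) - s) * ((e:ℝ) - b) / ((e:ℝ) - s)) * (segMean x s b - segMean x b e) ^ 2 := by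
    rw [cusum, mul_pow, Real.sq_sqrt (by positivity)]
  rw [sum_sq_sub_mean x s e hse, sum_sq_sub_mean x s b hsb, sum_sq_sub_mean x b e hbe,
    ← hsq, hc2, hm]
  field_simp
  ring

lemma lbd_insert_of_not_lt (A : Finset ℕ) (θ t : ℕ) (h : ¬ θ < t) :
    lbd (insert θ A) t = lbd A t := by
  unfold lbd
  rw [Finset.insert_comm, Finset.filter_insert, if_neg h]

lemma ubd_insert_of_lt (A : Finset ℕ) (n θ t : ℕ) (h : ¬ t ≤ θ) :
    ubd (insert θ A) n t = ubd A n t := by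
  unfold ubd
  rw [Finset.insert_comm, Finset.filter_insert, if_neg h]

lemma lbd_insert_of_ge (A : Finset ℕ) (θ t c : ℕ) (hc : c ∈ A) (hθc : θ ≤ c) (hct : c < t) :
    lbd (insert θ A) t = lbd A t := by
  unfold lbd
  by_cases h : θ < t
  · rw [Finset.insert_comm, Finset.filter_insert, if_pos h, Finset.max_insert,
      max_eq_right]
    exact le_trans (WithBot.coe_le_coe.2 hθc)
      (Finset.le_max (Finset.mem_filter.2 ⟨Finset.mem_insert_of_mem hc, hct⟩))
  · rw [Finset.insert_comm, Finset.filter_insert, if_neg h]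

lemma ubd_insert_of_le (A : Finset ℕ) (n θ t c : ℕ) (hc : c ∈ A) (hθc : c ≤ θ) (hct : t ≤ c) :
    ubd (insert θ A) n t = ubd A n t := by
  unfold ubd
  by_cases h : t ≤ θ
  · rw [Finset.insert_comm, Finset.filter_insert, if_pos h, Finset.min_insert,
      min_eq_right]
    exact le_trans
      (Finset.min_le (Finset.mem_filter.2 ⟨Finset.mem_insert_of_mem hc, hct⟩))
      (WithTop.coe_le_coe.2 hθc)
  · rw [Finset.insert_comm, Finset.filter_insert, if_neg h]

lemma aux_bound (ω S N₁ r : ℝ) (hω : 0 ≤ ω) (hN₁ : 0 < N₁) (hr : 0 ≤ r) (hrle : r ≤ N₁)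
    (hS : |S| ≤ ω * Real.sqrt N₁) : Real.sqrt r * |S / N₁| ≤ ω := by
  have h1 : |S / N₁| = |S| / N₁ := by rw [abs_div, abs_of_pos hN₁]
  have h2 : Real.sqrt r ≤ Real.sqrt N₁ := Real.sqrt_le_sqrt hrle
  have hms : Real.sqrt N₁ * Real.sqrt N₁ = N₁ := Real.mul_self_sqrt hN₁.le
  have h3 : |S| / N₁ ≤ ω * Real.sqrt N₁ / N₁ := (div_le_div_iff_of_pos_right hN₁).2 hS
  calc Real.sqrt r * |S / N₁| ≤ Real.sqrt N₁ * (ω * Real.sqrt N₁ / N₁) := by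
        rw [h1]
        exact mul_le_mul h2 h3 (by positivity) (Real.sqrt_nonneg _)
    _ = ω * (Real.sqrt N₁ * Real.sqrt N₁) / N₁ := by ring
    _ = ω * N₁ / N₁ := by rw [hms]
    _ = ω := by field_simp

set_option maxHeartbeats 1000000 in
/-- Explicit form of the detection part of Proposition 6.1(a): if the signal
has a single change point `θ ∉ A` of size `d` in the local window `(c_-, c_+]`
and `|d| √(min(θ − c_-, c_+ − θ)/2) > 2ω + √(2 C'' ξ)`, then adding `θ` to `A`
decreases the Schwarz criterion. -/
theorem sc_decreases_detectable_change
    (n : ℕ) (hn : 1 ≤ n) (ξ C'' ω : ℝ) (hξ : 0 < ξ) (hC'' : 0 < C'') (hω : 0 < ω)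
    (f ε x : ℕ → ℝ) (hx : ∀ t, x t = f t + ε t) (hε : UIB ε n ω)
    (A : Finset ℕ) (hA : A ⊆ Finset.Icc 1 (n - 1))
    (θ : ℕ) (hθ : θ ∈ Finset.Icc 1 (n - 1)) (hθA : θ ∉ A)
    (cm cp : ℕ)
    (hcm1 : cm < θ) (hcm2 : cm ∈ insert 0 A)
    (hcm3 : ∀ a ∈ insert 0 A, a < θ → a ≤ cm)
    (hcp1 : θ < cp) (hcp2 : cp ∈ insert n A)
    (hcp3 : ∀ a ∈ insert n A, θ < a → cp ≤ a)
    (μ d : ℝ)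
    (hfθ : ∀ t ∈ Finset.Ioc cm cp, f t = μ + (if θ < t then d else 0))
    (hRSSpos : 0 < RSS x n (insert θ A))
    (hRSSup : RSS x n A ≤ C'' * n)
    (hd : 2 * ω + Real.sqrt (2 * C'' * ξ)
      < |d| * Real.sqrt (min ((θ : ℝ) - cm) ((cp : ℝ) - θ) / 2)) :
    SC x n ξ (insert θ A) < SC x n ξ A := by
  -- basic integer facts
  have hθ1 : 1 ≤ θ := (Finset.mem_Icc.1 hθ).1
  have hθn : θ < n := lt_of_le_of_lt (Finset.mem_Icc.1 hθ).2 (Nat.sub_lt hn one_pos)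
  have hcpn : cp ≤ n := by
    rcases Finset.mem_insert.1 hcp2 with h | h
    · exact h.le
    · exact le_trans (Finset.mem_Icc.1 (hA h)).2 (Nat.sub_le n 1)
  have hθnotmem0 : ∀ a ∈ insert 0 A, a ≠ θ := by
    intro a ha
    rcases Finset.mem_insert.1 ha with rfl | ha'
    · omega
    · intro h; exact hθA (h ▸ ha')
  have hθnotmemn : ∀ a ∈ insert n A, a ≠ θ := by
    intro a ha
    rcases Finset.mem_insert.1 ha with rfl | ha'
    · omega
    · intro h; exact hθA (h ▸ ha')
  -- real quantities
  have hN1 : (0:ℝ) < (θ:ℝ) - cm := by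
    have : (cm:ℝ) < θ := by exact_mod_cast hcm1
    linarith
  have hN2 : (0:ℝ) < (cp:ℝ) - θ := by
    have : (θ:ℝ) < cp := by exact_mod_cast hcp1
    linarith
  have hN : (0:ℝ) < (cp:ℝ) - cm := by linarith
  -- segment boundary computations inside the window
  have hAlow : ∀ a ∈ insert 0 A, a < cp → a ≤ cm := by
    intro a ha hacp
    by_contra h
    push_neg at h
    have hθa : θ ≤ a := le_of_not_gt (fun hlt => absurd (hcm3 a ha hlt) (by omega))
    have hθlta : θ < a := lt_of_le_of_ne hθa (Ne.symm (hθnotmem0 a ha))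
    have haA : a ∈ A := by
      rcases Finset.mem_insert.1 ha with rfl | ha' ; · omega
      · exact ha'
    exact absurd (hcp3 a (Finset.mem_insert_of_mem haA) hθlta) (by omega)
  have hAhigh : ∀ a ∈ insert n A, cm < a → cp ≤ a := by
    intro a ha hacm
    have hθa : θ ≤ a := by
      rcases Finset.mem_insert.1 ha with rfl | ha'
      · omega
      · exact le_of_not_gt (fun hlt =>
          absurd (hcm3 a (Finset.mem_insert_of_mem ha') hlt) (by omega))
    exact hcp3 a ha (lt_of_le_of_ne hθa (Ne.symm (hθnotmemn a ha)))
  have hlA : ∀ t, cm < t → t ≤ cp → lbd A t = cm := by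
    intro t h1 h2
    exact lbd_eq_of A t cm hcm2 h1 (fun a ha hat => hAlow a ha (lt_of_lt_of_le hat h2))
  have huA : ∀ t, cm < t → t ≤ cp → ubd A n t = cp := by
    intro t h1 h2
    exact ubd_eq_of A n t cp hcp2 h2 (fun a ha hta => hAhigh a ha (lt_of_lt_of_le h1 hta))
  have hlI1 : ∀ t, cm < t → t ≤ θ → lbd (insert θ A) t = cm := by
    intro t h1 h2
    apply lbd_eq_of _ t cm
      (Finset.insert_subset_insert 0 (Finset.subset_insert θ A) hcm2) h1
    intro a ha hat
    rcases Finset.mem_insert.1 ha with rfl | ha'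
    · exact Nat.zero_le cm
    rcases Finset.mem_insert.1 ha' with rfl | ha''
    · omega
    · exact hcm3 a (Finset.mem_insert_of_mem ha'') (by omega)
  have huI1 : ∀ t, cm < t → t ≤ θ → ubd (insert θ A) n t = θ := by
    intro t h1 h2
    apply ubd_eq_of _ n t θ
      (Finset.mem_insert_of_mem (Finset.mem_insert_self θ A)) h2
    intro a ha hta
    rcases Finset.mem_insert.1 ha with rfl | ha'
    · omega
    rcases Finset.mem_insert.1 ha' with rfl | ha''
    · exact le_refl _
    · exact le_of_not_gt (fun hlt =>
        absurd (hcm3 a (Finset.mem_insert_of_mem ha'') hlt) (by omega))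
  have hlI2 : ∀ t, θ < t → t ≤ cp → lbd (insert θ A) t = θ := by
    intro t h1 h2
    apply lbd_eq_of _ t θ
      (Finset.mem_insert_of_mem (Finset.mem_insert_self θ A)) h1
    intro a ha hat
    rcases Finset.mem_insert.1 ha with rfl | ha'
    · exact Nat.zero_le θ
    rcases Finset.mem_insert.1 ha' with rfl | ha''
    · exact le_refl _
    · exact le_of_not_gt (fun hlt =>
        absurd (hcp3 a (Finset.mem_insert_of_mem ha'') hlt) (by omega))
  have huI2 : ∀ t, θ < t → t ≤ cp → ubd (insert θ A) n t = cp := by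
    intro t h1 h2
    apply ubd_eq_of _ n t cp
      (Finset.insert_subset_insert n (Finset.subset_insert θ A) hcp2) h2
    intro a ha hta
    rcases Finset.mem_insert.1 ha with rfl | ha'
    · exact hcpn
    rcases Finset.mem_insert.1 ha' with rfl | ha''
    · omega
    · exact hcp3 a (Finset.mem_insert_of_mem ha'') (by omega)
  -- outside the window nothing changes
  have houtl : ∀ t, 1 ≤ t → t ≤ n → ¬ (cm < t ∧ t ≤ cp) →
      lbd (insert θ A) t = lbd A t := by
    intro t h1 h2 h3
    rcases not_and_or.1 h3 with h | h
    · exact lbd_insert_of_not_lt A θ t (by omega)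
    · push_neg at h
      have hcpA : cp ∈ A := by
        rcases Finset.mem_insert.1 hcp2 with rfl | h' ; · omega
        · exact h'
      exact lbd_insert_of_ge A θ t cp hcpA hcp1.le (by omega)
  have houtu : ∀ t, 1 ≤ t → t ≤ n → ¬ (cm < t ∧ t ≤ cp) →
      ubd (insert θ A) n t = ubd A n t := by
    intro t h1 h2 h3
    rcases not_and_or.1 h3 with h | h
    · push_neg at h
      have hcmA : cm ∈ A := by
        rcases Finset.mem_insert.1 hcm2 with rfl | h' ; · omega
        · exact h'
      exact ubd_insert_of_le A n θ t cm hcmA hcm1.le (by omega)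
    · push_neg at h
      exact ubd_insert_of_lt A n θ t (by omega)
  -- RSS decomposition
  have hsubset : Finset.Ioc cm cp ⊆ Finset.Icc 1 n := by
    intro t ht
    rw [Finset.mem_Ioc] at ht
    rw [Finset.mem_Icc]
    omega
  have hkey : RSS x n A = RSS x n (insert θ A) + cusum x cm θ cp ^ 2 := by
    have h1 : RSS x n A - RSS x n (insert θ A)
        = ∑ t ∈ Finset.Icc 1 n,
          ((x t - segMean x (lbd A t) (ubd A n t)) ^ 2
            - (x t - segMean x (lbd (insert θ A) t) (ubd (insert θ A) n t)) ^ 2) := by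
      rw [RSS, RSS, ← Finset.sum_sub_distrib]
    have h2 : ∑ t ∈ Finset.Icc 1 n,
          ((x t - segMean x (lbd A t) (ubd A n t)) ^ 2
            - (x t - segMean x (lbd (insert θ A) t) (ubd (insert θ A) n t)) ^ 2)
        = ∑ t ∈ Finset.Ioc cm cp,
          ((x t - segMean x (lbd A t) (ubd A n t)) ^ 2
            - (x t - segMean x (lbd (insert θ A) t) (ubd (insert θ A) n t)) ^ 2) := by
      symm
      apply Finset.sum_subset hsubset
      intro t ht hnt
      rw [Finset.mem_Icc] at ht
      rw [Finset.mem_Ioc] at hnt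
      rw [houtl t ht.1 ht.2 hnt, houtu t ht.1 ht.2 hnt, sub_self]
    have h3 : ∑ t ∈ Finset.Ioc cm cp,
          ((x t - segMean x (lbd A t) (ubd A n t)) ^ 2
            - (x t - segMean x (lbd (insert θ A) t) (ubd (insert θ A) n t)) ^ 2)
        = ∑ t ∈ Finset.Ioc cm cp, (x t - segMean x cm cp) ^ 2
          - (∑ t ∈ Finset.Ioc cm θ, (x t - segMean x cm θ) ^ 2
            + ∑ t ∈ Finset.Ioc θ cp, (x t - segMean x θ cp) ^ 2) := by
      rw [Finset.sum_sub_distrib]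
      congr 1
      · apply Finset.sum_congr rfl
        intro t ht
        rw [Finset.mem_Ioc] at ht
        rw [hlA t ht.1 ht.2, huA t ht.1 ht.2]
      · rw [← Finset.sum_Ioc_consecutive _ hcm1.le hcp1.le]
        congr 1
        · apply Finset.sum_congr rfl
          intro t ht
          rw [Finset.mem_Ioc] at ht
          rw [hlI1 t ht.1 ht.2, huI1 t ht.1 ht.2]
        · apply Finset.sum_congr rfl
          intro t ht
          rw [Finset.mem_Ioc] at ht
          rw [hlI2 t ht.1 ht.2, huI2 t ht.1 ht.2]
    have h4 := anova x cm θ cp hcm1 hcp1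
    have := h1.trans (h2.trans h3)
    linarith
  -- mean of the signal on the two halves
  have hmf1 : segMean f cm θ = μ := by
    rw [segMean]
    have hcong : ∀ t ∈ Finset.Ioc cm θ, f t = μ := by
      intro t ht
      rw [Finset.mem_Ioc] at ht
      rw [hfθ t (Finset.mem_Ioc.2 ⟨ht.1, le_trans ht.2 hcp1.le⟩), if_neg (not_lt.2 ht.2),
        add_zero]
    rw [Finset.sum_congr rfl hcong, Finset.sum_const, nsmul_eq_mul, Nat.card_Ioc]
    have hcast : ((θ - cm : ℕ) : ℝ) = (θ:ℝ) - cm := by push_cast [hcm1.le]; ring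
    rw [hcast]
    field_simp
  have hmf2 : segMean f θ cp = μ + d := by
    rw [segMean]
    have hcong : ∀ t ∈ Finset.Ioc θ cp, f t = μ + d := by
      intro t ht
      rw [Finset.mem_Ioc] at ht
      rw [hfθ t (Finset.mem_Ioc.2 ⟨lt_trans hcm1 ht.1, ht.2⟩), if_pos ht.1]
    rw [Finset.sum_congr rfl hcong, Finset.sum_const, nsmul_eq_mul, Nat.card_Ioc]
    have hcast : ((cp - θ : ℕ) : ℝ) = (cp:ℝ) - θ := by push_cast [hcp1.le]; ring
    rw [hcast]
    field_simp
  -- cusum of the signal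
  have hr0 : (0:ℝ) ≤ ((θ:ℝ) - cm) * ((cp:ℝ) - θ) / ((cp:ℝ) - cm) := by positivity
  have hcf : cusum f cm θ cp
      = Real.sqrt (((θ:ℝ) - cm) * ((cp:ℝ) - θ) / ((cp:ℝ) - cm)) * (-d) := by
    rw [cusum, hmf1, hmf2]; ring
  -- cusum linearity
  have hsm : ∀ s e : ℕ, segMean x s e = segMean f s e + segMean ε s e := by
    intro s e
    rw [segMean, segMean, segMean, ← add_div, ← Finset.sum_add_distrib]
    exact congrArg (· / _) (Finset.sum_congr rfl (fun t _ => hx t))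
  have hcx : cusum x cm θ cp = cusum f cm θ cp + cusum ε cm θ cp := by
    rw [cusum, cusum, cusum, hsm, hsm]; ring
  -- cusum of the noise is small
  have hrle1 : ((θ:ℝ) - cm) * ((cp:ℝ) - θ) / ((cp:ℝ) - cm) ≤ (θ:ℝ) - cm := by
    rw [div_le_iff₀ hN]; nlinarith
  have hrle2 : ((θ:ℝ) - cm) * ((cp:ℝ) - θ) / ((cp:ℝ) - cm) ≤ (cp:ℝ) - θ := by
    rw [div_le_iff₀ hN]; nlinarith
  have hS1 : |∑ t ∈ Finset.Ioc cm θ, ε t| ≤ ω * Real.sqrt ((θ:ℝ) - cm) :=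
    hε cm θ hcm1 hθn.le
  have hS2 : |∑ t ∈ Finset.Ioc θ cp, ε t| ≤ ω * Real.sqrt ((cp:ℝ) - θ) :=
    hε θ cp hcp1 hcpn
  have hb1 : Real.sqrt (((θ:ℝ) - cm) * ((cp:ℝ) - θ) / ((cp:ℝ) - cm))
      * |segMean ε cm θ| ≤ ω := by
    rw [segMean]
    exact aux_bound ω _ _ _ hω.le hN1 hr0 hrle1 hS1
  have hb2 : Real.sqrt (((θ:ℝ) - cm) * ((cp:ℝ) - θ) / ((cp:ℝ) - cm))
      * |segMean ε θ cp| ≤ ω := by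
    rw [segMean]
    exact aux_bound ω _ _ _ hω.le hN2 hr0 hrle2 hS2
  have hce : |cusum ε cm θ cp| ≤ 2 * ω := by
    rw [cusum, abs_mul, abs_of_nonneg (Real.sqrt_nonneg _)]
    have habs : |segMean ε cm θ - segMean ε θ cp| ≤ |segMean ε cm θ| + |segMean ε θ cp| :=
      abs_sub _ _
    have := mul_le_mul_of_nonneg_left habs (Real.sqrt_nonneg
      (((θ:ℝ) - cm) * ((cp:ℝ) - θ) / ((cp:ℝ) - cm)))
    nlinarith [Real.sqrt_nonneg (((θ:ℝ) - cm) * ((cp:ℝ) - θ) / ((cp:ℝ) - cm))]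
  -- lower bound on the cusum of the signal
  have hminr : min ((θ:ℝ) - cm) ((cp:ℝ) - θ) / 2
      ≤ ((θ:ℝ) - cm) * ((cp:ℝ) - θ) / ((cp:ℝ) - cm) := by
    rw [div_le_div_iff₀ two_pos hN]
    have m1 := mul_le_mul_of_nonneg_right (min_le_left ((θ:ℝ) - cm) ((cp:ℝ) - θ)) hN2.le
    have m2 := mul_le_mul_of_nonneg_right (min_le_right ((θ:ℝ) - cm) ((cp:ℝ) - θ)) hN1.le
    nlinarith [m1, m2]
  have hcflow : |d| * Real.sqrt (min ((θ:ℝ) - cm) ((cp:ℝ) - θ) / 2) ≤ |cusum f cm θ cp| := by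
    rw [hcf, abs_mul, abs_of_nonneg (Real.sqrt_nonneg _), abs_neg]
    exact le_trans (mul_le_mul_of_nonneg_left (Real.sqrt_le_sqrt hminr) (abs_nonneg d))
      (le_of_eq (mul_comm _ _))
  have hlow : Real.sqrt (2 * C'' * ξ) < |cusum x cm θ cp| := by
    have h2 : |cusum f cm θ cp| ≤ |cusum x cm θ cp| + |cusum ε cm θ cp| := by
      have : cusum f cm θ cp = cusum x cm θ cp - cusum ε cm θ cp := by
        rw [hcx]; ring
      rw [this]
      exact abs_sub _ _
    linarith
  have hcsq : 2 * C'' * ξ < cusum x cm θ cp ^ 2 := by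
    calc 2 * C'' * ξ = Real.sqrt (2 * C'' * ξ) ^ 2 := (Real.sq_sqrt (by positivity)).symm
      _ < |cusum x cm θ cp| ^ 2 := by
          apply pow_lt_pow_left₀ hlow (Real.sqrt_nonneg _)
          norm_num
      _ = cusum x cm θ cp ^ 2 := sq_abs _
  -- conclude
  have hR0pos : 0 < RSS x n A := by nlinarith [sq_nonneg (cusum x cm θ cp)]
  have hnr : (0:ℝ) < n := by exact_mod_cast Nat.lt_of_lt_of_le Nat.zero_lt_one hn
  rw [SC, SC, Finset.card_insert_of_notMem hθA]
  have hlog1 : Real.log (RSS x n (insert θ A) / n)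
      = Real.log (RSS x n (insert θ A)) - Real.log n := Real.log_div hRSSpos.ne' hnr.ne'
  have hlog0 : Real.log (RSS x n A / n)
      = Real.log (RSS x n A) - Real.log n := Real.log_div hR0pos.ne' hnr.ne'
  have hld : Real.log (RSS x n (insert θ A)) - Real.log (RSS x n A)
      = Real.log (RSS x n (insert θ A) / RSS x n A) :=
    (Real.log_div hRSSpos.ne' hR0pos.ne').symm
  have h5 : Real.log (RSS x n (insert θ A) / RSS x n A)
      ≤ RSS x n (insert θ A) / RSS x n A - 1 :=
    Real.log_le_sub_one_of_pos (by positivity)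
  have h6 : RSS x n (insert θ A) / RSS x n A - 1 < -(2 * C'' * ξ) / RSS x n A := by
    rw [div_sub_one hR0pos.ne']
    exact (div_lt_div_iff_of_pos_right hR0pos).2 (by linarith)
  have h7 : -(2 * C'' * ξ) / RSS x n A ≤ -(2 * ξ) / n := by
    rw [neg_div, neg_div, neg_le_neg_iff]
    have heq : 2 * ξ / (n:ℝ) = 2 * C'' * ξ / (C'' * n) := by
      field_simp
    rw [heq]
    apply div_le_div_of_nonneg_left (by positivity) hR0pos hRSSup
  have h8 : Real.log (RSS x n (insert θ A)) - Real.log (RSS x n A) < -(2 * ξ) / n := by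
    rw [hld]; linarith
  have h9 : (n:ℝ) / 2 * (Real.log (RSS x n (insert θ A)) - Real.log (RSS x n A))
      < (n:ℝ) / 2 * (-(2 * ξ) / n) :=
    mul_lt_mul_of_pos_left h8 (by positivity)
  have h10 : (n:ℝ) / 2 * (-(2 * ξ) / n) = -ξ := by
    field_simp
  rw [hlog1, hlog0]
  push_cast
  nlinarith
end
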